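/- For every integer k ≥ 1, the radio number of the middle graph M(P_{2k}) of the path P_{2k} is at most 4k² − 1, and for every integer k ≥ 1, the radio number of the middle graph M(P_{2k+1}) of the path P_{2k+1} is at most 4k(k+1). -/

import Mathlib

/-- The middle graph `M(P n)` of the path `P n`: vertices are
`v 1, …, v n` (encoded as even indices `0, 2, …, 2n-2`) together with
`v' 1, …, v' (n-1)` (encoded as odd indices `1, 3, …, 2n-3`), where
`v' i` corresponds to the edge `e i = v i v (i+1)`.  Two vertices are
adjacent iff their indices differ by `1` (i.e. `v' i` is adjacent to
`v i` and `v (i+1)`), or they are both odd and differ by `2`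
(i.e. `v' i` is adjacent to `v' (i+1)`). -/
def middlePath (n : ℕ) : SimpleGraph (Fin (2 * n - 1)) where
  Adj a b := ((a : ℕ) + 1 = (b : ℕ) ∨ (b : ℕ) + 1 = (a : ℕ)) ∨
    ((a : ℕ) % 2 = 1 ∧ (b : ℕ) % 2 = 1 ∧
      ((a : ℕ) + 2 = (b : ℕ) ∨ (b : ℕ) + 2 = (a : ℕ)))
  symm := by constructor; intro a b h; tauto
  loopless := by constructor; intro a h; rcases h with (h | h) | ⟨-, -, h | h⟩ <;> omega

/-- `φ` is a radio labeling of `G`: distinct vertices `u, v` satisfy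
`|φ u - φ v| ≥ diam G + 1 - d(u, v)`. -/
def IsRadioLabeling {V : Type*} (G : SimpleGraph V) (φ : V → ℕ) : Prop :=
  ∀ u v : V, u ≠ v → (G.diam : ℤ) + 1 ≤ (G.dist u v : ℤ) + |(φ u : ℤ) - (φ v : ℤ)|

/-- The span of a labeling `φ`: the maximum of `|φ u - φ v|` over all pairs. -/
def labelSpan {V : Type*} [Fintype V] (φ : V → ℕ) : ℕ :=
  Finset.univ.sup fun p : V × V => ((φ p.1 : ℤ) - (φ p.2 : ℤ)).natAbs

/-- The radio number of `G`: the minimum span over all radio labelings. -/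
noncomputable def radioNumber {V : Type*} [Fintype V] (G : SimpleGraph V) : ℕ :=
  sInf {s | ∃ φ : V → ℕ, IsRadioLabeling G φ ∧ labelSpan φ = s}

/-!
In `M(P_n)` the distance between the vertices of indices `a ≠ b` is `⌊|a - b| / 2⌋`, plus one
unless both are edge-vertices, so `diam M(P_n) = n`. Write `n = 2k` or `n = 2k + 1`. List the
vertices starting with the central edge-vertex `v'_k` (index `2k - 1`) and then alternately take the
next vertex of the right half (indices `2k, 2k + 1, …`; for odd `n` starting at `2k + 1`, with
`v_{k+1}` of index `2k` put last) and of the left half (indices `0, 1, …`). Labelling greedily, each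
label exceeding the previous one by `diam + 1 - d(previous vertex, next vertex)`, makes the radio
condition tight for consecutive vertices, while labels two steps apart differ by at least the
diameter, which settles all other pairs. The last label is `4k² - 1`, resp. `4k(k + 1)`.
-/

namespace SimpleGraph

variable {V : Type*} {G : SimpleGraph V}

lemma Walk.le_add_length {f : V → ℕ} (hf : ∀ a c, G.Adj a c → f a ≤ f c + 1) {a b : V}
    (p : G.Walk a b) : f a ≤ f b + p.length := by
  induction p with
  | nil => simp
  | cons h _ ih => rw [Walk.length_cons]; linarith [hf _ _ h]

lemma exists_walk_length_le_of_descent {b : V} {f : V → ℕ}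
    (hf : ∀ a, a ≠ b → ∃ c, G.Adj a c ∧ f c < f a) (a : V) :
    ∃ p : G.Walk a b, p.length ≤ f a := by
  induction hfa : f a using Nat.strong_induction_on generalizing a with
  | _ m ih =>
    by_cases hab : a = b
    · subst hab
      exact ⟨.nil, Nat.zero_le _⟩
    obtain ⟨c, hac, hc⟩ := hf a hab
    obtain ⟨p, hp⟩ := ih (f c) (hfa ▸ hc) c rfl
    exact ⟨.cons hac p, by rw [Walk.length_cons]; omega⟩

lemma reachable_and_dist_eq_of_descent {b : V} {f : V → ℕ} (hb : f b = 0)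
    (hlip : ∀ a c, G.Adj a c → f a ≤ f c + 1) (hdesc : ∀ a, a ≠ b → ∃ c, G.Adj a c ∧ f c < f a)
    (a : V) : G.Reachable a b ∧ G.dist a b = f a := by
  obtain ⟨p, hp⟩ := exists_walk_length_le_of_descent hdesc a
  obtain ⟨q, hq⟩ := Reachable.exists_walk_length_eq_dist ⟨p⟩
  have := q.le_add_length hlip
  exact ⟨⟨p⟩, le_antisymm ((dist_le p).trans hp) (by omega)⟩

lemma diam_le_of_dist_le (hG : G.Preconnected) {D : ℕ} (h : ∀ u v, G.dist u v ≤ D) :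
    G.diam ≤ D := by
  have : G.ediam ≤ D := ediam_le_of_edist_le fun u v => by
    rw [← (hG u v).coe_dist_eq_edist]; exact_mod_cast h u v
  exact (ENat.toNat_le_toNat this (ENat.natCast_ne_top D)).trans_eq (ENat.toNat_natCast D)

end SimpleGraph

open SimpleGraph

lemma isRadioLabeling_comp_of_consecutive {V : Type*} {G : SimpleGraph V} (hG : G.Preconnected)
    {D : ℕ} (hD : G.diam ≤ D) {ρ : V → ℕ} (hρ : Function.Injective ρ) {f : ℕ → ℕ}
    (hf : Monotone f) (hgap : ∀ r, D + f r ≤ f (r + 2))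
    (hstep : ∀ u v, ρ v = ρ u + 1 → D + 1 + f (ρ u) ≤ G.dist u v + f (ρ v)) :
    IsRadioLabeling G (f ∘ ρ) := by
  intro u v huv
  wlog hlt : ρ u < ρ v generalizing u v
  · rw [dist_comm, abs_sub_comm]
    exact this v u huv.symm (lt_of_le_of_ne (not_lt.1 hlt) (hρ.ne huv.symm))
  have hmono : f (ρ u) ≤ f (ρ v) := hf hlt.le
  rw [Function.comp_apply, Function.comp_apply, abs_sub_comm,
    abs_of_nonneg (sub_nonneg.2 (by exact_mod_cast hmono))]
  rcases Nat.lt_or_ge (ρ u + 1) (ρ v) with hfar | hnext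
  · have := hgap (ρ u)
    have := hf (show ρ u + 2 ≤ ρ v by omega)
    have := (hG u v).pos_dist_of_ne huv
    omega
  · have := hstep u v (by omega)
    omega

lemma labelSpan_le {V : Type*} [Fintype V] {φ : V → ℕ} {M : ℕ} (h : ∀ v, φ v ≤ M) :
    labelSpan φ ≤ M :=
  Finset.sup_le fun p _ => by have := h p.1; have := h p.2; omega

lemma radioNumber_le_labelSpan {V : Type*} [Fintype V] {G : SimpleGraph V} {φ : V → ℕ}
    (h : IsRadioLabeling G φ) : radioNumber G ≤ labelSpan φ :=
  Nat.sInf_le ⟨φ, h, rfl⟩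

/-- Two edge-vertices (odd indices) are joined along the path `v'_1 ⋯ v'_{n-1}`; any other pair
needs one more step. -/
def middlePathDist (a b : ℕ) : ℕ :=
  if a = b then 0 else if a % 2 = 1 ∧ b % 2 = 1 then Nat.dist a b / 2 else Nat.dist a b / 2 + 1

lemma middlePath_reachable_and_dist_eq {n : ℕ} (a b : Fin (2 * n - 1)) :
    (middlePath n).Reachable a b ∧ (middlePath n).dist a b = middlePathDist a b := by
  refine reachable_and_dist_eq_of_descent (f := fun a : Fin _ => middlePathDist a b)
    (by simp [middlePathDist]) (fun u w h => ?_) (fun u hub => ?_) a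
  · simp only [middlePath, middlePathDist, Nat.dist] at h ⊢
    split_ifs <;> omega
  · obtain ⟨u, hu⟩ := u
    obtain ⟨b, hb⟩ := b
    have hub' : u ≠ b := fun h => hub (Fin.ext h)
    let c : ℕ := if u < b then (if u % 2 = 1 ∧ u + 2 ≤ b then u + 2 else u + 1)
      else (if u % 2 = 1 ∧ b + 2 ≤ u then u - 2 else u - 1)
    have hc : c < 2 * n - 1 := by simp only [c]; split_ifs <;> omega
    refine ⟨⟨c, hc⟩, ?_, ?_⟩
    · simp only [middlePath, c]; split_ifs <;> omega
    · simp only [middlePathDist, Nat.dist, c]; split_ifs <;> omega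

lemma middlePath_dist {n : ℕ} (a b : Fin (2 * n - 1)) :
    (middlePath n).dist a b = middlePathDist a b :=
  (middlePath_reachable_and_dist_eq a b).2

lemma middlePath_preconnected (n : ℕ) : (middlePath n).Preconnected :=
  fun a b => (middlePath_reachable_and_dist_eq a b).1

lemma middlePath_diam_le (n : ℕ) : (middlePath n).diam ≤ n :=
  diam_le_of_dist_le (middlePath_preconnected n) fun a b => by
    have := a.isLt; have := b.isLt
    rw [middlePath_dist]; simp only [middlePathDist, Nat.dist]; split_ifs <;> omega

def rankEven (k v : ℕ) : ℕ :=
  if v = 2 * k - 1 then 0 else if 2 * k ≤ v then 2 * (v - 2 * k) + 1 else 2 * v + 2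

def labelEven (k : ℕ) : ℕ → ℕ
  | 0 => 0
  | r + 1 => labelEven k r + if r = 0 then 2 * k else if r % 4 = 3 then k + 1 else k

lemma labelEven_eq (k : ℕ) {r : ℕ} (hr : 1 ≤ r) : labelEven k r = k * (r + 1) + r / 4 := by
  induction r, hr using Nat.le_induction with
  | base => show 0 + 2 * k = _; omega
  | succ r hr ih =>
    rw [labelEven, ih, if_neg (by omega)]
    have : k * (r + 1 + 1) = k * (r + 1) + k := by ring
    split_ifs <;> omega

lemma labelEven_four_mul_sub_two (k : ℕ) : labelEven k (4 * k - 2) = 4 * k ^ 2 - 1 := by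
  rcases Nat.eq_zero_or_pos k with rfl | hk
  · rfl
  · rw [labelEven_eq k (by omega)]
    have : k * (4 * k - 2 + 1) + k = 4 * k ^ 2 := by
      zify [show 2 ≤ 4 * k by omega]; ring
    omega

lemma monotone_labelEven (k : ℕ) : Monotone (labelEven k) :=
  monotone_nat_of_le_succ fun r => by rw [labelEven]; omega

lemma isRadioLabeling_middlePath_even (k : ℕ) :
    IsRadioLabeling (middlePath (2 * k)) (labelEven k ∘ fun v => rankEven k v) := by
  refine isRadioLabeling_comp_of_consecutive (middlePath_preconnected _) (middlePath_diam_le _)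
    (fun u v h => Fin.ext ?_) (monotone_labelEven k) (fun r => ?_) (fun u v h => ?_)
  · have := u.isLt; have := v.isLt
    simp only [rankEven] at h; split_ifs at h <;> omega
  · simp only [labelEven]; split_ifs <;> omega
  · rw [middlePath_dist, h, labelEven]
    have := u.isLt; have := v.isLt
    simp only [rankEven, middlePathDist, Nat.dist] at h ⊢
    split_ifs at h ⊢ <;> omega

theorem radioNumber_middlePath_even_le (k : ℕ) :
    radioNumber (middlePath (2 * k)) ≤ 4 * k ^ 2 - 1 :=
  (radioNumber_le_labelSpan (isRadioLabeling_middlePath_even k)).trans <| labelSpan_le fun v => by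
    rw [← labelEven_four_mul_sub_two]
    refine monotone_labelEven k ?_
    have := v.isLt
    simp only [rankEven]; split_ifs <;> omega

def rankOdd (k v : ℕ) : ℕ :=
  if v = 2 * k - 1 then 0 else if v = 2 * k then 4 * k
  else if 2 * k < v then 2 * (v - 2 * k - 1) + 1 else 2 * v + 2

def labelOdd (k : ℕ) : ℕ → ℕ
  | 0 => 0
  | r + 1 => labelOdd k r + if r = 0 then 2 * k + 1 else if r % 4 = 2 then k else k + 1

lemma labelOdd_two_mul_add_two (k i : ℕ) :
    labelOdd k (2 * i + 2) = (2 * k + 1) * (i + 1) + k + 1 + i / 2 := by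
  induction i with
  | zero => show 0 + (2 * k + 1) + (k + 1) = _; omega
  | succ i ih =>
    rw [show 2 * (i + 1) + 2 = 2 * i + 2 + 1 + 1 by ring, labelOdd, labelOdd, ih,
      if_neg (show 2 * i + 2 ≠ 0 by omega), if_neg (show 2 * i + 2 + 1 ≠ 0 by omega),
      show (2 * k + 1) * (i + 1 + 1) = (2 * k + 1) * (i + 1) + 2 * k + 1 by ring]
    split_ifs <;> omega

lemma labelOdd_four_mul (k : ℕ) : labelOdd k (4 * k) = 4 * k * (k + 1) := by
  rcases Nat.eq_zero_or_pos k with rfl | hk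
  · rfl
  · obtain ⟨j, rfl⟩ : ∃ j, k = j + 1 := ⟨k - 1, by omega⟩
    rw [show 4 * (j + 1) = 2 * (2 * j + 1) + 2 by ring, labelOdd_two_mul_add_two,
      show (2 * j + 1) / 2 = j by omega]
    ring

lemma monotone_labelOdd (k : ℕ) : Monotone (labelOdd k) :=
  monotone_nat_of_le_succ fun r => by rw [labelOdd]; omega

lemma isRadioLabeling_middlePath_odd (k : ℕ) :
    IsRadioLabeling (middlePath (2 * k + 1)) (labelOdd k ∘ fun v => rankOdd k v) := by
  refine isRadioLabeling_comp_of_consecutive (middlePath_preconnected _) (middlePath_diam_le _)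
    (fun u v h => Fin.ext ?_) (monotone_labelOdd k) (fun r => ?_) (fun u v h => ?_)
  · have := u.isLt; have := v.isLt
    simp only [rankOdd] at h; split_ifs at h <;> omega
  · simp only [labelOdd]; split_ifs <;> omega
  · rw [middlePath_dist, h, labelOdd]
    have := u.isLt; have := v.isLt
    simp only [rankOdd, middlePathDist, Nat.dist] at h ⊢
    split_ifs at h ⊢ <;> omega

theorem radioNumber_middlePath_odd_le (k : ℕ) :
    radioNumber (middlePath (2 * k + 1)) ≤ 4 * k * (k + 1) :=
  (radioNumber_le_labelSpan (isRadioLabeling_middlePath_odd k)).trans <| labelSpan_le fun v => by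
    rw [← labelOdd_four_mul]
    refine monotone_labelOdd k ?_
    have := v.isLt
    simp only [rankOdd]; split_ifs <;> omega

theorem radioNumber_middlePath_upper_general (k : ℕ) :
    radioNumber (middlePath (2 * k)) ≤ 4 * k ^ 2 - 1 ∧
    radioNumber (middlePath (2 * k + 1)) ≤ 4 * k * (k + 1) :=
  ⟨radioNumber_middlePath_even_le k, radioNumber_middlePath_odd_le k⟩

/-- For every `k ≥ 1`, the radio number of the middle graph of the path `P (2k)`
is at most `4k² - 1`, and the radio number of the middle graph of `P (2k+1)` is
at most `4k(k+1)`. -/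
theorem radioNumber_middlePath_upper (k : ℕ) (hk : 1 ≤ k) :
    radioNumber (middlePath (2 * k)) ≤ 4 * k ^ 2 - 1 ∧
    radioNumber (middlePath (2 * k + 1)) ≤ 4 * k * (k + 1) :=
  radioNumber_middlePath_upper_general k
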